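/- For all Borel probability measures μ and ν on ℝ and all z ∈ ℂ∖ℝ: G_μ(z) ≠ 0, G_ν(z) ≠ 0, and G_μ(z) + G_ν(z) − z·G_μ(z)·G_ν(z) ≠ 0. -/

import Mathlib

open MeasureTheory

/-- The Cauchy transform `G_ρ(z) = ∫ 1/(z−t) dρ(t)` of a measure on `ℝ`. -/
noncomputable def cauchyTransform (ρ : Measure ℝ) (z : ℂ) : ℂ := ∫ t, (z - (t : ℂ))⁻¹ ∂ρ

/-! Put `y = Im z` and `F_ρ = 1 / G_ρ`. For a probability measure `ρ`,
`Im G_ρ(z) = -y ∫ |z - t|⁻² dρ` and, by Cauchy–Schwarz, `|G_ρ(z)|² ≤ ∫ |z - t|⁻² dρ`; hence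
`G_ρ(z) ≠ 0` and `y · Im F_ρ(z) ≥ y²`. Since `G_μ + G_ν - z G_μ G_ν = G_μ G_ν (F_μ + F_ν - z)` and
`y · Im (F_μ + F_ν - z) ≥ y² > 0`, the last factor does not vanish either. -/

lemma sq_integral_norm_le_integral_norm_sq {α E : Type*} [MeasurableSpace α]
    [NormedAddCommGroup E] {μ : Measure α} [IsProbabilityMeasure μ] {f : α → E}
    (hf : MemLp f 2 μ) : (∫ a, ‖f a‖ ∂μ) ^ 2 ≤ ∫ a, ‖f a‖ ^ 2 ∂μ := by
  have h := ProbabilityTheory.variance_nonneg (fun a => ‖f a‖) μ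
  rw [ProbabilityTheory.variance_eq_sub hf.norm] at h
  simpa using h

namespace Complex

variable {z : ℂ}

lemma sub_ofReal_ne_zero_of_im_ne_zero (hz : z.im ≠ 0) (t : ℝ) : z - t ≠ 0 := fun h ↦
  hz (by simpa using congrArg Complex.im h)

lemma norm_inv_sub_ofReal_le (hz : z.im ≠ 0) (t : ℝ) : ‖(z - t)⁻¹‖ ≤ |z.im|⁻¹ := by
  rw [norm_inv]
  refine inv_anti₀ (abs_pos.mpr hz) ?_
  simpa using abs_im_le_norm (z - t)

lemma im_inv_sub_ofReal (z : ℂ) (t : ℝ) : ((z - t)⁻¹).im = -z.im * ‖(z - t)⁻¹‖ ^ 2 := by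
  rw [inv_im, norm_inv, inv_pow, Complex.sq_norm]
  simp [div_eq_mul_inv]

lemma continuous_inv_sub_ofReal (hz : z.im ≠ 0) : Continuous fun t : ℝ ↦ (z - t)⁻¹ :=
  (continuous_const.sub continuous_ofReal).inv₀ (sub_ofReal_ne_zero_of_im_ne_zero hz)

lemma memLp_top_inv_sub_ofReal (hz : z.im ≠ 0) (μ : Measure ℝ) :
    MemLp (fun t : ℝ ↦ (z - t)⁻¹) ⊤ μ :=
  memLp_top_of_bound (continuous_inv_sub_ofReal hz).aestronglyMeasurable _
    (.of_forall (norm_inv_sub_ofReal_le hz))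

end Complex

open Complex

section CauchyTransform

variable {ρ : Measure ℝ} {z : ℂ}

lemma cauchyTransform_im [IsFiniteMeasure ρ] (hz : z.im ≠ 0) :
    (cauchyTransform ρ z).im = -z.im * ∫ t, ‖(z - t)⁻¹‖ ^ 2 ∂ρ := by
  have hint := (memLp_top_inv_sub_ofReal hz ρ).integrable le_top
  rw [cauchyTransform, ← imCLM_apply, ← imCLM.integral_comp_comm hint, ← integral_const_mul]
  simp only [imCLM_apply, im_inv_sub_ofReal]

lemma integral_norm_inv_sub_ofReal_sq_pos [IsFiniteMeasure ρ] [NeZero ρ] (hz : z.im ≠ 0) :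
    0 < ∫ t, ‖(z - t)⁻¹‖ ^ 2 ∂ρ := by
  have hint : Integrable (fun t : ℝ ↦ ‖(z - t)⁻¹‖ ^ 2) ρ :=
    ((memLp_top_inv_sub_ofReal hz ρ).mono_exponent le_top).integrable_norm_pow two_ne_zero
  rw [integral_pos_iff_support_of_nonneg (fun t ↦ by positivity) hint]
  have : Function.support (fun t : ℝ ↦ ‖(z - t)⁻¹‖ ^ 2) = Set.univ :=
    Set.eq_univ_of_forall fun t ↦ by simp [sub_ofReal_ne_zero_of_im_ne_zero hz t]
  rw [this, Measure.measure_univ_pos]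
  exact NeZero.ne ρ

lemma cauchyTransform_ne_zero [IsFiniteMeasure ρ] [NeZero ρ] (hz : z.im ≠ 0) :
    cauchyTransform ρ z ≠ 0 := by
  intro h
  have := cauchyTransform_im (ρ := ρ) hz
  rw [h, zero_im, eq_comm] at this
  exact mul_ne_zero (neg_ne_zero.mpr hz) (integral_norm_inv_sub_ofReal_sq_pos hz).ne' this

lemma norm_cauchyTransform_sq_le [IsProbabilityMeasure ρ] (hz : z.im ≠ 0) :
    ‖cauchyTransform ρ z‖ ^ 2 ≤ ∫ t, ‖(z - t)⁻¹‖ ^ 2 ∂ρ :=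
  calc ‖cauchyTransform ρ z‖ ^ 2 ≤ (∫ t, ‖(z - t)⁻¹‖ ∂ρ) ^ 2 := by
        gcongr; exact norm_integral_le_integral_norm _
    _ ≤ ∫ t, ‖(z - t)⁻¹‖ ^ 2 ∂ρ :=
        sq_integral_norm_le_integral_norm_sq
          ((memLp_top_inv_sub_ofReal hz ρ).mono_exponent le_top)

lemma im_sq_le_im_mul_im_inv_cauchyTransform [IsProbabilityMeasure ρ] (hz : z.im ≠ 0) :
    z.im ^ 2 ≤ z.im * (cauchyTransform ρ z)⁻¹.im := by
  have hG := cauchyTransform_ne_zero (ρ := ρ) hz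
  have hI := integral_norm_inv_sub_ofReal_sq_pos (ρ := ρ) hz
  have hCS := norm_cauchyTransform_sq_le (ρ := ρ) hz
  have hn : 0 < ‖cauchyTransform ρ z‖ ^ 2 := by positivity
  rw [inv_im, cauchyTransform_im hz, ← Complex.sq_norm, neg_mul, neg_neg, mul_div_assoc',
    le_div_iff₀ hn]
  nlinarith [sq_nonneg z.im]

end CauchyTransform

lemma Complex.add_sub_mul_mul_ne_zero {a b z : ℂ} (ha : a ≠ 0) (hb : b ≠ 0) (hz : z.im ≠ 0)
    (ha' : z.im ^ 2 ≤ z.im * a⁻¹.im) (hb' : z.im ^ 2 ≤ z.im * b⁻¹.im) :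
    a + b - z * a * b ≠ 0 := by
  have hw : (a⁻¹ + b⁻¹ - z).im ≠ 0 := by
    simp only [sub_im, add_im]
    intro h
    have : z.im * a⁻¹.im + z.im * b⁻¹.im = z.im ^ 2 := by linear_combination z.im * h
    have : 0 < z.im ^ 2 := by positivity
    linarith
  have : a + b - z * a * b = a * b * (a⁻¹ + b⁻¹ - z) := by field_simp; ring
  rw [this]
  exact mul_ne_zero (mul_ne_zero ha hb) fun h ↦ hw (by rw [h, zero_im])

theorem cauchyTransform_boolean_denominator_ne_zero
    (μ ν : Measure ℝ) [IsProbabilityMeasure μ] [IsProbabilityMeasure ν]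
    (z : ℂ) (hz : z.im ≠ 0) :
    cauchyTransform μ z ≠ 0 ∧ cauchyTransform ν z ≠ 0 ∧
    cauchyTransform μ z + cauchyTransform ν z
      - z * cauchyTransform μ z * cauchyTransform ν z ≠ 0 := by
  have hμ := cauchyTransform_ne_zero (ρ := μ) hz
  have hν := cauchyTransform_ne_zero (ρ := ν) hz
  exact ⟨hμ, hν, add_sub_mul_mul_ne_zero hμ hν hz
    (im_sq_le_im_mul_im_inv_cauchyTransform hz) (im_sq_le_im_mul_im_inv_cauchyTransform hz)⟩
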